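/- arXiv:2001.11961 — 2 statements merged into one kernel-verified Lean document; each statement's English description precedes it below -/
import Mathlib

section
/- Let OPT > 0 and φ₀ ≥ 1 be real numbers, let p be a natural number, and let c₁,...,c_p be nonnegative reals with c_j ≤ 2·OPT for each j. Define φ_i recursively by φ_i = φ_{i-1}·(1 - c_i/(2·OPT)) and suppose φ_p ≥ 1. Then Σ_{j=1}^p c_j ≤ 2·ln(φ₀)·OPT. -/
/-! Unrolling the recursion gives `φ p = φ₀ · ∏ (1 - c_j / (2·OPT))`. Taking logarithms and using
`log y ≤ y - 1` on each factor, `0 ≤ log (φ p) ≤ log φ₀ - (∑ c_j) / (2·OPT)`. -/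

open Finset

theorem eq_mul_prod_Icc_of_eq_mul {M : Type*} [CommMonoid M] {φ r : ℕ → M} {p : ℕ}
    (hrec : ∀ i, 1 ≤ i → i ≤ p → φ i = φ (i - 1) * r i) :
    φ p = φ 0 * ∏ i ∈ Icc 1 p, r i := by
  induction p with
  | zero => simp
  | succ p ih =>
    rw [prod_Icc_succ_top (by omega), ← mul_assoc,
      ← ih fun i hi hip => hrec i hi (by omega), hrec (p + 1) (by omega) le_rfl, Nat.add_sub_cancel]

theorem Real.log_mul_prod_le {ι : Type*} {s : Finset ι} {a : ℝ} {r : ι → ℝ}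
    (hr : ∀ i ∈ s, 0 ≤ r i) (hpos : 0 < a * ∏ i ∈ s, r i) :
    Real.log (a * ∏ i ∈ s, r i) ≤ Real.log a + ∑ i ∈ s, (r i - 1) := by
  obtain ⟨ha, hprod⟩ : 0 < a ∧ 0 < ∏ i ∈ s, r i :=
    (pos_and_pos_or_neg_and_neg_of_mul_pos hpos).resolve_right
      fun h => (prod_nonneg hr).not_gt h.2
  have hr_ne : ∀ i ∈ s, r i ≠ 0 := prod_ne_zero_iff.mp hprod.ne'
  rw [Real.log_mul ha.ne' hprod.ne', Real.log_prod hr_ne]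
  gcongr with i hi
  exact Real.log_le_sub_one_of_pos ((hr i hi).lt_of_ne' (hr_ne i hi))

theorem greedy_total_cost_bound_general (OPT φ₀ : ℝ) (hOPT : 0 < OPT)
    (p : ℕ) (c : ℕ → ℝ)
    (hc : ∀ j, 1 ≤ j → j ≤ p → 0 ≤ c j ∧ c j ≤ 2 * OPT)
    (φ : ℕ → ℝ) (hφ0 : φ 0 = φ₀)
    (hrec : ∀ i, 1 ≤ i → i ≤ p → φ i = φ (i - 1) * (1 - c i / (2 * OPT)))
    (hφp : 1 ≤ φ p) :
    ∑ j ∈ Finset.Icc 1 p, c j ≤ 2 * Real.log φ₀ * OPT := by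
  have hOPT2 : 0 < 2 * OPT := by positivity
  have hfactor : ∀ j ∈ Icc 1 p, 0 ≤ 1 - c j / (2 * OPT) := fun j hj => by
    obtain ⟨hj1, hjp⟩ := mem_Icc.mp hj
    linarith [(div_le_one hOPT2).mpr (hc j hj1 hjp).2]
  have hunroll := eq_mul_prod_Icc_of_eq_mul hrec
  rw [hφ0] at hunroll
  have hlog := Real.log_mul_prod_le hfactor (by rw [← hunroll]; linarith)
  rw [← hunroll] at hlog
  have hsum : ∑ j ∈ Icc 1 p, (1 - c j / (2 * OPT) - 1) = -((∑ j ∈ Icc 1 p, c j) / (2 * OPT)) := by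
    simp [sum_div]
  have hcost : (∑ j ∈ Icc 1 p, c j) / (2 * OPT) ≤ Real.log φ₀ := by
    linarith [Real.log_nonneg hφp]
  rw [div_le_iff₀ hOPT2] at hcost
  linarith

theorem greedy_total_cost_bound (OPT φ₀ : ℝ) (hOPT : 0 < OPT) (hφ₀ : 1 ≤ φ₀)
    (p : ℕ) (c : ℕ → ℝ)
    (hc : ∀ j, 1 ≤ j → j ≤ p → 0 ≤ c j ∧ c j ≤ 2 * OPT)
    (φ : ℕ → ℝ) (hφ0 : φ 0 = φ₀)
    (hrec : ∀ i, 1 ≤ i → i ≤ p → φ i = φ (i - 1) * (1 - c i / (2 * OPT)))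
    (hφp : 1 ≤ φ p) :
    ∑ j ∈ Finset.Icc 1 p, c j ≤ 2 * Real.log φ₀ * OPT :=
  greedy_total_cost_bound_general OPT φ₀ hOPT p c hc φ hφ0 hrec hφp
end

section
/- Let w ≥ 1, let c > 0, b > 0 be reals, and let sc₁,...,sc_w > 0 and m₁,...,m_w ≥ 2 be reals with Σ_j m_j = φ, Σ_j sc_j ≤ OPT, and c/b ≤ sc_j/(m_j - 1) for all j as well as c ≤ sc_j for all j. Then c/(b + 1) ≤ OPT/φ. -/
theorem greedy_ratio_core (w : ℕ) (hw : 1 ≤ w) (c b OPT φ : ℝ)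
    (hc : 0 < c) (hb : 0 < b) (sc m : Fin w → ℝ)
    (hsc : ∀ j, 0 < sc j) (hm : ∀ j, (2 : ℝ) ≤ m j)
    (hφ : ∑ j, m j = φ) (hOPT : ∑ j, sc j ≤ OPT)
    (hratio : ∀ j, c / b ≤ sc j / (m j - 1))
    (hcle : ∀ j, c ≤ sc j) :
    c / (b + 1) ≤ OPT / φ := by
  have hφpos : 0 < φ := by
    rw [← hφ]
    have : (0:ℝ) < ∑ j : Fin w, (2:ℝ) := by
      rw [Finset.sum_const, Finset.card_univ, Fintype.card_fin]
      positivity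
    exact lt_of_lt_of_le this (Finset.sum_le_sum fun j _ => hm j)
  have key : ∀ j, c * m j ≤ sc j * (b + 1) := by
    intro j
    have hm1 : (0:ℝ) < m j - 1 := by linarith [hm j]
    have h1 : c * (m j - 1) ≤ sc j * b := by
      have := (div_le_div_iff₀ hb hm1).mp (hratio j)
      linarith
    nlinarith [hcle j]
  have hsum : c * φ ≤ (∑ j, sc j) * (b + 1) := by
    rw [← hφ, Finset.mul_sum, Finset.sum_mul]
    exact Finset.sum_le_sum fun j _ => key j
  rw [div_le_div_iff₀ (by positivity) hφpos]
  nlinarith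
end
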